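/- Let M and S be two stabilizer groups on n qubits. The map sending cosets ḡ ∈ M/(M ∩ S^⊥) and h̄ ∈ S/(S ∩ M^⊥) to [g, h] ∈ F_2 for any representatives g, h is well-defined and non-degenerate: if [ḡ, h̄] = 0 for all ḡ then h̄ is the trivial coset, and symmetrically for ḡ. -/

import Mathlib

open Matrix
open scoped Classical

noncomputable section

/-- Operators on `n` qubits, as matrices indexed by computational basis states. -/
abbrev QOp (n : ℕ) : Type := Matrix (Fin n → Fin 2) (Fin n → Fin 2) ℂ

/-- The single-qubit Pauli matrices `I, X, Y, Z`. -/
def sigma1 (t : Fin 4) : Matrix (Fin 2) (Fin 2) ℂ :=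
  if t = 0 then 1
  else if t = 1 then !![0, 1; 1, 0]
  else if t = 2 then !![0, -Complex.I; Complex.I, 0]
  else !![1, 0; 0, -1]

/-- Tensor product of single-qubit Pauli matrices, as an `n`-qubit operator. -/
def pauliTensor (n : ℕ) (a : Fin n → Fin 4) : QOp n :=
  Matrix.of fun i j => ∏ k, sigma1 (a k) (i k) (j k)

/-- `P` is an `n`-qubit Pauli unitary: `i^s` times a tensor product of `I,X,Y,Z`. -/
def IsPauli {n : ℕ} (P : QOp n) : Prop :=
  ∃ (s : Fin 4) (a : Fin n → Fin 4), P = Complex.I ^ (s : ℕ) • pauliTensor n a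

/-- The `F₂` commutator bit: `0` if the operators commute, `1` otherwise. -/
def commBit {n : ℕ} (P Q : QOp n) : ZMod 2 := if P * Q = Q * P then 0 else 1

/-- A unit of the matrix algebra is a Pauli unitary. -/
def IsPauliU {n : ℕ} (u : (QOp n)ˣ) : Prop := IsPauli (u : QOp n)

/-- The `F₂` commutator bit on a group: `0` if the elements commute, `1` otherwise. -/
def commBitU {G : Type*} [Group G] (g h : G) : ZMod 2 := if g * h = h * g then 0 else 1

/-- A stabilizer group: a group of pairwise-commuting Hermitian Pauli observables
not containing `-I`. -/
def IsStabilizerGroup {n : ℕ} (S : Subgroup (QOp n)ˣ) : Prop :=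
  (∀ g ∈ S, IsPauliU g ∧ ((g : QOp n))ᴴ = (g : QOp n)) ∧
  (∀ g ∈ S, ∀ h ∈ S, g * h = h * g) ∧
  (-1 : (QOp n)ˣ) ∉ S

section CommBit

variable {G : Type*} [Group G]

theorem commBitU_eq_zero_iff {g h : G} : commBitU g h = 0 ↔ Commute g h := by
  unfold commBitU
  split_ifs with hgh
  · exact iff_of_true rfl hgh
  · exact iff_of_false one_ne_zero hgh

theorem commBitU_comm (g h : G) : commBitU g h = commBitU h g := by
  simp only [commBitU, eq_comm]

theorem mem_centralizer_iff_forall_commBitU_eq_zero {s : Set G} {g : G} :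
    g ∈ Subgroup.centralizer s ↔ ∀ h ∈ s, commBitU g h = 0 := by
  simp only [Subgroup.mem_centralizer_iff, commBitU_eq_zero_iff, Commute, SemiconjBy, eq_comm]

/-- Both `g * c * (h * d)` and `h * d * (g * c)` factor as `(_ * _) * (c * d)`. -/
theorem commBitU_mul_mul {g h c d : G} (hch : Commute c h) (hdg : Commute d g)
    (hcd : Commute c d) : commBitU (g * c) (h * d) = commBitU g h := by
  have hleft : g * c * (h * d) = g * h * (c * d) := by
    rw [mul_assoc g, ← mul_assoc c, hch.eq, mul_assoc, mul_assoc]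
  have hright : h * d * (g * c) = h * g * (c * d) := by
    rw [mul_assoc h, ← mul_assoc d, hdg.eq, mul_assoc, mul_assoc, hcd.eq]
  simp only [commBitU, hleft, hright, mul_left_inj]

end CommBit

theorem coset_pairing_wellDefined_nondegenerate_general (n : ℕ) (M S : Subgroup (QOp n)ˣ) :
    (∀ g ∈ M, ∀ g' ∈ M, ∀ h ∈ S, ∀ h' ∈ S,
        g⁻¹ * g' ∈ Subgroup.centralizer (S : Set (QOp n)ˣ) →
        h⁻¹ * h' ∈ Subgroup.centralizer (M : Set (QOp n)ˣ) →
        commBitU g h = commBitU g' h') ∧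
    (∀ h ∈ S, (∀ g ∈ M, commBitU g h = 0) →
        h ∈ S ⊓ Subgroup.centralizer (M : Set (QOp n)ˣ)) ∧
    (∀ g ∈ M, (∀ h ∈ S, commBitU g h = 0) →
        g ∈ M ⊓ Subgroup.centralizer (S : Set (QOp n)ˣ)) := by
  refine ⟨fun g hg g' hg' h hh h' hh' hc hd => ?_, fun h hh hall => ?_, fun g hg hall => ?_⟩
  · have hcM : g⁻¹ * g' ∈ M := M.mul_mem (M.inv_mem hg) hg'
    rw [← mul_inv_cancel_left g g', ← mul_inv_cancel_left h h']
    exact (commBitU_mul_mul (Subgroup.mem_centralizer_iff.mp hc h hh).symm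
      (Subgroup.mem_centralizer_iff.mp hd g hg).symm
      (Subgroup.mem_centralizer_iff.mp hd _ hcM)).symm
  · refine ⟨hh, mem_centralizer_iff_forall_commBitU_eq_zero.mpr fun g hg => ?_⟩
    rw [commBitU_comm]
    exact hall g hg
  · exact ⟨hg, mem_centralizer_iff_forall_commBitU_eq_zero.mpr hall⟩

/-- The commutator-bit pairing between cosets of `M/(M ∩ S^⊥)` and `S/(S ∩ M^⊥)` is
well-defined (independent of the chosen representatives) and non-degenerate. -/
theorem coset_pairing_wellDefined_nondegenerate (n : ℕ) (M S : Subgroup (QOp n)ˣ)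
    (hM : IsStabilizerGroup M) (hS : IsStabilizerGroup S) :
    (∀ g ∈ M, ∀ g' ∈ M, ∀ h ∈ S, ∀ h' ∈ S,
        g⁻¹ * g' ∈ Subgroup.centralizer (S : Set (QOp n)ˣ) →
        h⁻¹ * h' ∈ Subgroup.centralizer (M : Set (QOp n)ˣ) →
        commBitU g h = commBitU g' h') ∧
    (∀ h ∈ S, (∀ g ∈ M, commBitU g h = 0) →
        h ∈ S ⊓ Subgroup.centralizer (M : Set (QOp n)ˣ)) ∧
    (∀ g ∈ M, (∀ h ∈ S, commBitU g h = 0) →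
        g ∈ M ⊓ Subgroup.centralizer (S : Set (QOp n)ˣ)) :=
  coset_pairing_wellDefined_nondegenerate_general n M S
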